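/- arXiv:2110.07081 — 3 statements merged into one kernel-verified Lean document; each statement's English description precedes it below -/
import Mathlib

section
/- Let A be a unital C*-algebra, let a, g ∈ A satisfy 0 ≤ a ≤ 1 and 0 ≤ g ≤ 1, and let ε₁, ε₂ ≥ 0. Then, with comparison taken in the 2×2 matrix algebra M₂(A), one has (a − (ε₁ + ε₂))_+ ≼ ((1 − g) a (1 − g) − ε₁)_+ ⊕ (g − ε₂/2)_+. -/
/-! Write `s = √a`, so that `a = s(1 - g)²s + s(2g - g²)s`. The first summand is `c*c` for
`c = (1 - g)s`, and `cc* = (1 - g)a(1 - g)`; the second is at most `s(2(g - ε₂/2)₊ + ε₂)s`, and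
`s² = a ≤ 1`. Hence `a ≤ p + q + ε₁ + ε₂` with `p = (c*c - ε₁)₊ ≼ (cc* - ε₁)₊` and
`q = 2s(g - ε₂/2)₊s ≼ (g - ε₂/2)₊`. Rørdam's lemma (`a ≤ b + ε` implies `(a - ε)₊ ≼ b`) gives
`(a - ε₁ - ε₂)₊ ≼ p + q`, and `p + q ≼ p ⊕ q` in `M₂(A)`. -/

attribute [local instance] Matrix.linftyOpNormedRing

/-- `a` is Cuntz subequivalent to `b`: for every `ε > 0` there is `y` with
`‖y * b * y* - a‖ < ε`. -/
def CuntzLE {A : Type*} [NonUnitalNormedRing A] [StarRing A] (a b : A) : Prop :=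
  ∀ ε > (0 : ℝ), ∃ y : A, ‖y * b * star y - a‖ < ε

/-- `(a - ε)₊`, the image of `a` under the continuous functional calculus applied to
`t ↦ max (t - ε) 0`. -/
noncomputable def cutdown {A : Type*} [CStarAlgebra A] (a : A) (ε : ℝ) : A :=
  cfc (fun t : ℝ => max (t - ε) 0) a

open CFC

section NormedStarRing

variable {A : Type*} [NonUnitalNormedRing A] [StarRing A]

lemma cuntzLE_mul_mul_star (u d : A) : CuntzLE (u * d * star u) d :=
  fun _ hε => ⟨u, by simpa using hε⟩

lemma CuntzLE.of_forall_exists_norm_sub_le {x y : A}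
    (h : ∀ δ > 0, ∃ x', ‖x - x'‖ ≤ δ ∧ CuntzLE x' y) : CuntzLE x y := by
  intro ε hε
  obtain ⟨x', hxx', hx'y⟩ := h (ε / 2) (by positivity)
  obtain ⟨v, hv⟩ := hx'y (ε / 2) (by positivity)
  refine ⟨v, ?_⟩
  calc ‖v * y * star v - x‖ = ‖(v * y * star v - x') + (x' - x)‖ := by rw [sub_add_sub_cancel]
    _ ≤ _ + _ := norm_add_le _ _
    _ < ε / 2 + ε / 2 := by rw [norm_sub_rev x']; exact add_lt_add_of_lt_of_le hv hxx'
    _ = ε := add_halves ε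

variable [NormedStarGroup A]

lemma norm_mul_mul_star_le (u d : A) : ‖u * d * star u‖ ≤ ‖u‖ ^ 2 * ‖d‖ :=
  norm_mul₃_le.trans_eq (by rw [norm_star]; ring)

lemma CuntzLE.trans {x y z : A} (hxy : CuntzLE x y) (hyz : CuntzLE y z) : CuntzLE x z := by
  intro ε hε
  obtain ⟨v, hv⟩ := hxy (ε / 2) (by positivity)
  obtain ⟨w, hw⟩ := hyz (ε / 2 / (‖v‖ ^ 2 + 1)) (by positivity)
  refine ⟨v * w, ?_⟩
  have hsplit : v * w * z * star (v * w) - x =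
      v * (w * z * star w - y) * star v + (v * y * star v - x) := by
    simp only [star_mul, mul_sub, sub_mul, mul_assoc]; abel
  have hconj : ‖v * (w * z * star w - y) * star v‖ ≤ ε / 2 := by
    calc _ ≤ ‖v‖ ^ 2 * (ε / 2 / (‖v‖ ^ 2 + 1)) :=
          (norm_mul_mul_star_le _ _).trans (by gcongr)
      _ ≤ ε / 2 := by
          rw [mul_div_assoc', div_le_iff₀ (by positivity)]
          nlinarith [sq_nonneg ‖v‖]
  calc ‖v * w * z * star (v * w) - x‖ ≤ _ + _ := hsplit ▸ norm_add_le _ _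
    _ < ε / 2 + ε / 2 := add_lt_add_of_le_of_lt hconj hv
    _ = ε := add_halves ε

lemma CuntzLE.exists_add_approx {r p q P Q : A} (hr : CuntzLE r (p + q)) (hp : CuntzLE p P)
    (hq : CuntzLE q Q) :
    ∀ ε > 0, ∃ y₁ y₂ : A, ‖y₁ * P * star y₁ + y₂ * Q * star y₂ - r‖ < ε := by
  intro ε hε
  obtain ⟨v, hv⟩ := hr (ε / 2) (by positivity)
  obtain ⟨y₁, hy₁⟩ := (cuntzLE_mul_mul_star v p).trans hp (ε / 4) (by positivity)
  obtain ⟨y₂, hy₂⟩ := (cuntzLE_mul_mul_star v q).trans hq (ε / 4) (by positivity)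
  refine ⟨y₁, y₂, ?_⟩
  have hsplit : y₁ * P * star y₁ + y₂ * Q * star y₂ - r = (y₁ * P * star y₁ - v * p * star v) +
      (y₂ * Q * star y₂ - v * q * star v) + (v * (p + q) * star v - r) := by
    simp only [mul_add, add_mul]; abel
  calc ‖y₁ * P * star y₁ + y₂ * Q * star y₂ - r‖ ≤ _ + _ + _ := hsplit ▸ norm_add₃_le
    _ < ε / 4 + ε / 4 + ε / 2 := by gcongr
    _ = ε := by ring

end NormedStarRing

lemma cuntzLE_smul_left {A : Type*} [NormedRing A] [StarRing A] [Algebra ℝ A]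
    [StarModule ℝ A] (x : A) {c : ℝ} (hc : 0 ≤ c) : CuntzLE (c • x) x := by
  have hconj : c • x = (√c • (1 : A)) * x * star (√c • (1 : A)) := by
    rw [star_smul, star_one, star_trivial, smul_mul_assoc, one_mul, mul_smul_comm, mul_one,
      smul_smul, Real.mul_self_sqrt hc]
  exact hconj ▸ cuntzLE_mul_mul_star _ _

lemma cuntzLE_diagonal_of_forall_exists {A : Type*} [NormedRing A] [StarRing A] {r P Q : A}
    (h : ∀ ε > 0, ∃ y₁ y₂ : A, ‖y₁ * P * star y₁ + y₂ * Q * star y₂ - r‖ < ε) :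
    CuntzLE (Matrix.diagonal ![r, 0]) (Matrix.diagonal ![P, Q]) := by
  intro ε hε
  obtain ⟨y₁, y₂, hy⟩ := h ε hε
  refine ⟨!![y₁, y₂; 0, 0], ?_⟩
  have hmat : !![y₁, y₂; 0, 0] * Matrix.diagonal ![P, Q] * star !![y₁, y₂; 0, 0] -
      Matrix.diagonal ![r, 0] = Matrix.diagonal ![y₁ * P * star y₁ + y₂ * Q * star y₂ - r, 0] := by
    simp only [Matrix.diagonal_vec2, Matrix.star_eq_conjTranspose]
    ext i j
    fin_cases i <;> fin_cases j <;> simp [Matrix.vecMul, dotProduct, Fin.sum_univ_two]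
  rw [hmat, Matrix.linfty_opNorm_diagonal, Pi.norm_def]
  simpa [Fin.univ_succ] using hy

section CStarAlgebra

variable {A : Type*} [CStarAlgebra A]

lemma norm_cutdown_sub_cutdown_add_le (a : A) (ε : ℝ) {δ : ℝ} (hδ : 0 ≤ δ) :
    ‖cutdown a ε - cutdown a (ε + δ)‖ ≤ δ := by
  rw [cutdown, cutdown, ← cfc_sub ..]
  refine norm_cfc_le hδ fun t _ => ?_
  rw [Real.norm_eq_abs]
  calc |max (t - ε) 0 - max (t - (ε + δ)) 0| ≤ |(t - ε) - (t - (ε + δ))| :=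
        abs_max_sub_max_le_abs _ _ _
    _ = δ := by rw [sub_sub_sub_cancel_left, add_sub_cancel_left, abs_of_nonneg hδ]

lemma sub_algebraMap_eq_cfc {a : A} (ha : IsSelfAdjoint a) (ε : ℝ) :
    a - algebraMap ℝ A ε = cfc (fun t : ℝ => t - ε) a := by
  rw [cfc_sub .., cfc_id' ℝ a, cfc_const ε a]

/-- `w = φ(a)` with `φ(t) = ((t - ε)₊ / h(t))^{1/2}`; the lower bound `c` keeps `φ` continuous. -/
lemma exists_conjugate_cfc_eq_cutdown (a : A) {h : ℝ → ℝ} (hh : Continuous h) {ε c : ℝ}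
    (hc : 0 < c) (hhc : ∀ t, ε ≤ t → c ≤ h t) :
    ∃ w : A, IsSelfAdjoint w ∧ w * cfc h a * w = cutdown a ε := by
  set φ : ℝ → ℝ := fun t => √(max (t - ε) 0) / √(max (h t) c)
  have hden : ∀ t, 0 < max (h t) c := fun t => lt_max_of_lt_right hc
  have hφ : Continuous φ :=
    (by fun_prop : Continuous _).div (by fun_prop) fun t => (Real.sqrt_pos.2 (hden t)).ne'
  refine ⟨cfc φ a, cfc_predicate φ a, ?_⟩
  rw [← cfc_mul .., ← cfc_mul .., cutdown]
  refine cfc_congr fun t _ => ?_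
  rcases le_total t ε with ht | ht
  · simp [φ, max_eq_right (sub_nonpos.2 ht)]
  · have hmax : max (h t) c = h t := max_eq_left (hhc t ht)
    have hpos : 0 < h t := hmax ▸ hden t
    simp only [φ, hmax]
    field_simp
    rw [Real.sq_sqrt (le_max_right _ _), Real.sq_sqrt hpos.le]
    ring

variable [PartialOrder A] [StarOrderedRing A]

/-- `w = √x (y + ε/2)^{-1/2}` satisfies `w (y + ε/2) w* = x` and `‖w‖ ≤ 1`. -/
lemma CuntzLE.of_le {x y : A} (hx : 0 ≤ x) (hxy : x ≤ y) : CuntzLE x y := by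
  intro ε hε
  set Y := y + algebraMap ℝ A (ε / 2)
  have hY : IsStrictlyPositive Y :=
    (isStrictlyPositive_algebraMap (by positivity)).nonneg_add (hx.trans hxy)
  set w := sqrt x * Y ^ (-(1 / 2) : ℝ)
  have hw : ‖w‖ ≤ 1 := (le_iff_norm_sqrt_mul_rpow x Y).1 <|
    hxy.trans (le_add_of_nonneg_right (algebraMap_nonneg A (by positivity)))
  have hwY : w * Y * star w = x := by
    rw [star_mul, (IsSelfAdjoint.of_nonneg rpow_nonneg).star_eq,
      (IsSelfAdjoint.of_nonneg (sqrt_nonneg x)).star_eq]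
    calc _ = sqrt x * (Y ^ (-(1 / 2) : ℝ) * Y * Y ^ (-(1 / 2) : ℝ)) * sqrt x := by
          simp only [w, mul_assoc]
      _ = x := by rw [conjugate_rpow_neg_one_half Y, mul_one, sqrt_mul_sqrt_self x]
  refine ⟨w, ?_⟩
  have hdiff : w * y * star w - x = -((ε / 2) • (w * star w)) := by
    rw [show y = Y - algebraMap ℝ A (ε / 2) by simp [Y], mul_sub, sub_mul, hwY,
      Algebra.algebraMap_eq_smul_one, mul_smul_comm, mul_one, smul_mul_assoc]
    abel
  rw [hdiff, norm_neg, norm_smul, CStarRing.norm_self_mul_star,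
    Real.norm_of_nonneg (by positivity)]
  calc ε / 2 * (‖w‖ * ‖w‖) ≤ ε / 2 * (1 * 1) := by gcongr
    _ < ε := by linarith

lemma cutdown_nonneg (a : A) (ε : ℝ) : 0 ≤ cutdown a ε :=
  cfc_nonneg fun _ _ => le_max_right _ _

lemma le_cutdown_add_algebraMap {a : A} (ha : IsSelfAdjoint a) (ε : ℝ) :
    a ≤ cutdown a ε + algebraMap ℝ A ε := by
  rw [cutdown, ← cfc_add_const ..]
  conv_lhs => rw [← cfc_id' ℝ a]
  exact cfc_mono fun t _ => by linarith [le_max_left (t - ε) 0]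

lemma cuntzLE_cutdown_of_cfc_le {a b : A} {h : ℝ → ℝ} (hh : Continuous h) {ε : ℝ}
    (hpos : ∀ δ > 0, ∃ c > 0, ∀ t, ε + δ ≤ t → c ≤ h t) (hle : cfc h a ≤ b) :
    CuntzLE (cutdown a ε) b := by
  refine CuntzLE.of_forall_exists_norm_sub_le fun δ hδ => ⟨cutdown a (ε + δ),
    norm_cutdown_sub_cutdown_add_le a ε hδ.le, ?_⟩
  obtain ⟨c, hc, hhc⟩ := hpos δ hδ
  obtain ⟨w, hw, hwa⟩ := exists_conjugate_cfc_eq_cutdown a hh hc hhc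
  have hle' : cutdown a (ε + δ) ≤ w * b * star w := by
    rw [← hwa, hw.star_eq]
    exact hw.conjugate_le_conjugate hle
  exact (CuntzLE.of_le (cutdown_nonneg _ _) hle').trans (cuntzLE_mul_mul_star w b)

lemma cuntzLE_cutdown_of_le_add {a b : A} (ha : IsSelfAdjoint a) {ε : ℝ}
    (hab : a ≤ b + algebraMap ℝ A ε) : CuntzLE (cutdown a ε) b :=
  cuntzLE_cutdown_of_cfc_le (h := fun t => t - ε) (by fun_prop)
    (fun δ hδ => ⟨δ, hδ, fun t ht => by linarith⟩)
    (by rwa [← sub_algebraMap_eq_cfc ha, sub_le_iff_le_add])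

/-- `(x*x)(x*x - ε) = x*(xx* - ε)x ≤ x*(xx* - ε)₊x`, and `t(t - ε)` is bounded below on
`[ε + δ, ∞)`. -/
lemma cuntzLE_cutdown_star_mul_self (x : A) {ε : ℝ} (hε : 0 ≤ ε) :
    CuntzLE (cutdown (star x * x) ε) (cutdown (x * star x) ε) := by
  set e := cutdown (x * star x) ε
  have hcfc : cfc (fun t : ℝ => t * (t - ε)) (star x * x) =
      star x * (x * star x - algebraMap ℝ A ε) * x := by
    rw [cfc_mul .., cfc_id' ℝ (star x * x), ← sub_algebraMap_eq_cfc (.star_mul_self x)]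
    simp only [mul_sub, sub_mul, mul_assoc, ← Algebra.commutes]
  have hle : cfc (fun t : ℝ => t * (t - ε)) (star x * x) ≤ star x * e * star (star x) := by
    rw [hcfc, star_star]
    exact star_left_conjugate_le_conjugate
      (sub_le_iff_le_add.2 (le_cutdown_add_algebraMap (.mul_star_self x) ε)) x
  refine (cuntzLE_cutdown_of_cfc_le (by fun_prop)
    (fun δ hδ => ⟨δ ^ 2, by positivity, fun t ht => ?_⟩) hle).trans (cuntzLE_mul_mul_star _ e)
  nlinarith

lemma le_cutdown_add_conjugate_cutdown_add_algebraMap {a g : A} (ha₀ : 0 ≤ a) (ha₁ : a ≤ 1)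
    (hg : IsSelfAdjoint g) (ε₁ : ℝ) {ε₂ : ℝ} (hε₂ : 0 ≤ ε₂) :
    a ≤ cutdown (star ((1 - g) * sqrt a) * ((1 - g) * sqrt a)) ε₁ +
      sqrt a * ((2 : ℝ) • cutdown g (ε₂ / 2)) * sqrt a + algebraMap ℝ A (ε₁ + ε₂) := by
  set s := sqrt a
  set c := (1 - g) * s
  set e := cutdown g (ε₂ / 2)
  have hs : IsSelfAdjoint s := .of_nonneg (sqrt_nonneg a)
  have hss : s * s = a := sqrt_mul_sqrt_self a
  have hsplit : a = star c * c + s * (g + g - g * g) * s := by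
    simp only [c, star_mul, hs.star_eq, star_sub, star_one, hg.star_eq]
    rw [← hss]
    noncomm_ring
  have hhalves : algebraMap ℝ A ε₂ = algebraMap ℝ A (ε₂ / 2) + algebraMap ℝ A (ε₂ / 2) := by
    rw [← map_add, add_halves]
  have hg' : g + g - g * g ≤ (2 : ℝ) • e + algebraMap ℝ A ε₂ := by
    have hge := le_cutdown_add_algebraMap hg (ε₂ / 2)
    calc g + g - g * g ≤ g + g := sub_le_self _ (hg.mul_self_nonneg)
      _ ≤ (e + algebraMap ℝ A (ε₂ / 2)) + (e + algebraMap ℝ A (ε₂ / 2)) := add_le_add hge hge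
      _ = (2 : ℝ) • e + algebraMap ℝ A ε₂ := by rw [two_smul, hhalves]; abel
  have hconj : s * (g + g - g * g) * s ≤ s * ((2 : ℝ) • e) * s + algebraMap ℝ A ε₂ :=
    calc s * (g + g - g * g) * s ≤ s * ((2 : ℝ) • e + algebraMap ℝ A ε₂) * s :=
          hs.conjugate_le_conjugate hg'
      _ = s * ((2 : ℝ) • e) * s + ε₂ • a := by
          simp only [mul_add, add_mul, Algebra.algebraMap_eq_smul_one, mul_smul_comm, mul_one,
            smul_mul_assoc, hss]
      _ ≤ s * ((2 : ℝ) • e) * s + algebraMap ℝ A ε₂ := by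
          rw [Algebra.algebraMap_eq_smul_one]
          gcongr
  calc a = star c * c + s * (g + g - g * g) * s := hsplit
    _ ≤ (cutdown (star c * c) ε₁ + algebraMap ℝ A ε₁) +
        (s * ((2 : ℝ) • e) * s + algebraMap ℝ A ε₂) :=
      add_le_add (le_cutdown_add_algebraMap (.star_mul_self c) ε₁) hconj
    _ = _ := by rw [map_add]; abel

end CStarAlgebra

theorem stmt3_general {A : Type*} [CStarAlgebra A] [PartialOrder A] [StarOrderedRing A]
    (a g : A) (ha₀ : 0 ≤ a) (ha₁ : a ≤ 1) (hg₀ : 0 ≤ g)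
    (ε₁ ε₂ : ℝ) (hε₁ : 0 ≤ ε₁) (hε₂ : 0 ≤ ε₂) :
    CuntzLE (Matrix.diagonal ![cutdown a (ε₁ + ε₂), 0])
      (Matrix.diagonal ![cutdown ((1 - g) * a * (1 - g)) ε₁, cutdown g (ε₂ / 2)]) := by
  set s := sqrt a
  set c := (1 - g) * s
  have hs : star s = s := (IsSelfAdjoint.of_nonneg (sqrt_nonneg a)).star_eq
  have hss : s * s = a := sqrt_mul_sqrt_self a
  have hcc : c * star c = (1 - g) * a * (1 - g) := by
    rw [star_mul, hs, star_sub, star_one, hg₀.isSelfAdjoint.star_eq, mul_assoc, ← mul_assoc s,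
      hss, ← mul_assoc]
  have hp : CuntzLE (cutdown (star c * c) ε₁) (cutdown ((1 - g) * a * (1 - g)) ε₁) :=
    hcc ▸ cuntzLE_cutdown_star_mul_self c hε₁
  have hq : CuntzLE (s * ((2 : ℝ) • cutdown g (ε₂ / 2)) * s) (cutdown g (ε₂ / 2)) :=
    (hs ▸ cuntzLE_mul_mul_star s _).trans (cuntzLE_smul_left _ zero_le_two)
  have hr := cuntzLE_cutdown_of_le_add ha₀.isSelfAdjoint
    (le_cutdown_add_conjugate_cutdown_add_algebraMap ha₀ ha₁ hg₀.isSelfAdjoint ε₁ hε₂)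
  exact cuntzLE_diagonal_of_forall_exists (hr.exists_add_approx hp hq)

theorem stmt3 {A : Type*} [CStarAlgebra A] [PartialOrder A] [StarOrderedRing A]
    (a g : A) (ha₀ : 0 ≤ a) (ha₁ : a ≤ 1) (hg₀ : 0 ≤ g) (hg₁ : g ≤ 1)
    (ε₁ ε₂ : ℝ) (hε₁ : 0 ≤ ε₁) (hε₂ : 0 ≤ ε₂) :
    CuntzLE (Matrix.diagonal ![cutdown a (ε₁ + ε₂), 0])
      (Matrix.diagonal ![cutdown ((1 - g) * a * (1 - g)) ε₁, cutdown g (ε₂ / 2)]) :=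
  stmt3_general a g ha₀ ha₁ hg₀ ε₁ ε₂ hε₁ hε₂
end

section
/- Let A be a unital C*-algebra, let ε > 0, let a ∈ A be positive with ‖a‖ ≤ 1, and let n be a positive integer. Then (1 − aⁿ − ε)_+ ≼_A (1 − a − ε/n)_+. -/
/-!
Both sides are continuous functions of `a`: writing `f t = (1 - tⁿ - ε)₊` and
`g t = (1 - t - ε/n)₊`, Bernoulli's inequality `1 - tⁿ ≤ n (1 - t)` on the (nonnegative) spectrum
gives `f ≤ n g`. Such a domination already yields `cfc f a ≼ cfc g a`: for `δ > 0` the function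
`h = √((f - δ)₊ / g)` is continuous on the spectrum, because `(f - δ)₊` vanishes near the zeros
of `g`, and `h g h = (f - δ)₊` is within `δ` of `f`.
-/

open Topology

lemma abs_max_sub_sub_self_le {x δ : ℝ} (hx : 0 ≤ x) (hδ : 0 ≤ δ) :
    |max (x - δ) 0 - x| ≤ δ :=
  calc |max (x - δ) 0 - x| = |max (x - δ) 0 - max x 0| := by rw [max_eq_left hx]
    _ ≤ |x - δ - x| := abs_max_sub_max_le_abs _ _ _
    _ = δ := by rw [sub_sub_cancel_left, abs_neg, abs_of_nonneg hδ]

lemma max_one_sub_pow_sub_le {t : ℝ} (ht : -1 ≤ t) (ε : ℝ) {n : ℕ} (hn : n ≠ 0) :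
    max (1 - t ^ n - ε) 0 ≤ n * max (1 - t - ε / n) 0 := by
  have bernoulli : 1 + n * (t - 1) ≤ t ^ n := by
    simpa using one_add_mul_le_pow (a := t - 1) (by linarith) n
  have hn' : (0 : ℝ) < n := by positivity
  calc max (1 - t ^ n - ε) 0 ≤ max (n * (1 - t - ε / n)) 0 := by
        gcongr
        rw [mul_sub, mul_div_cancel₀ _ hn'.ne']
        linarith
    _ = n * max (1 - t - ε / n) 0 := by rw [mul_max_of_nonneg _ _ hn'.le, mul_zero]

lemma sqrt_max_sub_div_mul_mul_self {x y C δ : ℝ} (hxy : x ≤ C * y) (hy : 0 ≤ y) (hδ : 0 ≤ δ) :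
    √(max (x - δ) 0 / y) * y * √(max (x - δ) 0 / y) = max (x - δ) 0 := by
  rcases hy.eq_or_lt with hy0 | hy0
  · have hx : x - δ ≤ 0 := by rw [← hy0, mul_zero] at hxy; linarith
    simp [← hy0, max_eq_right hx]
  · rw [mul_right_comm, Real.mul_self_sqrt (div_nonneg (le_max_right _ _) hy0.le),
      div_mul_cancel₀ _ hy0.ne']

lemma ContinuousOn.sqrt_max_sub_div {X : Type*} [TopologicalSpace X] {s : Set X} {f g : X → ℝ}
    {C δ : ℝ} (hf : ContinuousOn f s) (hg : ContinuousOn g s)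
    (hfg : ∀ t ∈ s, f t ≤ C * g t) (hδ : 0 < δ) :
    ContinuousOn (fun t => √(max (f t - δ) 0 / g t)) s := by
  intro t₀ ht₀
  by_cases hgt₀ : g t₀ = 0
  · have hft₀ : f t₀ < δ := by
      have := hfg t₀ ht₀
      rw [hgt₀, mul_zero] at this
      linarith
    have hvanish : ∀ᶠ t in 𝓝[s] t₀, √(max (f t - δ) 0 / g t) = 0 := by
      filter_upwards [(hf t₀ ht₀).eventually_lt continuousWithinAt_const hft₀] with t ht
      simp [max_eq_right (sub_nonpos.2 ht.le)]
    refine (continuousWithinAt_const (b := (0 : ℝ))).congr_of_eventuallyEq hvanish ?_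
    simp [max_eq_right (sub_nonpos.2 hft₀.le)]
  · exact (((hf t₀ ht₀).sub continuousWithinAt_const).max continuousWithinAt_const
      |>.div (hg t₀ ht₀) hgt₀).sqrt

section CStarAlgebra

variable {A : Type*} [CStarAlgebra A] {a : A}

lemma norm_cfc_max_sub_sub_cfc_le {f : ℝ → ℝ} (hf : ContinuousOn f (spectrum ℝ a))
    (hf0 : ∀ t ∈ spectrum ℝ a, 0 ≤ f t) {δ : ℝ} (hδ : 0 ≤ δ) :
    ‖cfc (fun t => max (f t - δ) 0) a - cfc f a‖ ≤ δ := by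
  rw [← cfc_sub _ _ a (by fun_prop) hf]
  exact norm_cfc_le hδ fun t ht => abs_max_sub_sub_self_le (hf0 t ht) hδ

theorem cuntzLE_cfc_of_le_mul {f g : ℝ → ℝ} {C : ℝ} (hf : ContinuousOn f (spectrum ℝ a))
    (hg : ContinuousOn g (spectrum ℝ a)) (hf0 : ∀ t ∈ spectrum ℝ a, 0 ≤ f t)
    (hg0 : ∀ t ∈ spectrum ℝ a, 0 ≤ g t) (hfg : ∀ t ∈ spectrum ℝ a, f t ≤ C * g t) :
    CuntzLE (cfc f a) (cfc g a) := by
  intro η hη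
  set h : ℝ → ℝ := fun t => √(max (f t - η / 2) 0 / g t)
  have hh : ContinuousOn h (spectrum ℝ a) := hf.sqrt_max_sub_div hg hfg (half_pos hη)
  have hfactor : cfc h a * cfc g a * star (cfc h a) = cfc (fun t => max (f t - η / 2) 0) a := by
    rw [IsSelfAdjoint.cfc.star_eq, ← cfc_mul h g a hh hg,
      ← cfc_mul (fun t => h t * g t) h a (hh.mul hg) hh]
    exact cfc_congr fun t ht =>
      sqrt_max_sub_div_mul_mul_self (hfg t ht) (hg0 t ht) (half_pos hη).le
  refine ⟨cfc h a, ?_⟩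
  rw [hfactor]
  exact (norm_cfc_max_sub_sub_cfc_le hf hf0 (half_pos hη).le).trans_lt (half_lt_self hη)

lemma cutdown_one_sub_pow (ha : IsSelfAdjoint a) (ε : ℝ) (n : ℕ) :
    cutdown (1 - a ^ n) ε = cfc (fun t : ℝ => max (1 - t ^ n - ε) 0) a := by
  have hpoly : 1 - a ^ n = cfc (fun t : ℝ => 1 - t ^ n) a := by
    rw [cfc_sub (fun _ => 1) (· ^ n) a, cfc_const_one ℝ a, cfc_pow_id a n ha]
  rw [cutdown, hpoly, ← cfc_comp' (fun t => max (t - ε) 0) (fun t => 1 - t ^ n) a]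

end CStarAlgebra

theorem stmt11_general {A : Type*} [CStarAlgebra A] [PartialOrder A] [StarOrderedRing A]
    (ε : ℝ) (a : A) (ha : 0 ≤ a)
    (n : ℕ) (hn : 0 < n) :
    CuntzLE (cutdown (1 - a ^ n) ε) (cutdown (1 - a) (ε / n)) := by
  have hsa : IsSelfAdjoint a := .of_nonneg ha
  have hcut_one := cutdown_one_sub_pow hsa (ε / n) 1
  simp only [pow_one] at hcut_one
  rw [cutdown_one_sub_pow hsa, hcut_one]
  refine cuntzLE_cfc_of_le_mul (C := n) (by fun_prop) (by fun_prop) (fun _ _ => le_max_right _ _)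
    (fun _ _ => le_max_right _ _) (fun t ht => ?_)
  exact max_one_sub_pow_sub_le (by linarith [spectrum_nonneg_of_nonneg ha ht]) ε hn.ne'

theorem stmt11 {A : Type*} [CStarAlgebra A] [PartialOrder A] [StarOrderedRing A]
    (ε : ℝ) (hε : 0 < ε) (a : A) (ha : 0 ≤ a) (hnorm : ‖a‖ ≤ 1)
    (n : ℕ) (hn : 0 < n) :
    CuntzLE (cutdown (1 - a ^ n) ε) (cutdown (1 - a) (ε / n)) :=
  stmt11_general ε a ha n hn
end

section
/- Let ε > 0 and let f : [0, 1] → [0, 1] be a continuous function with f(0) = 0 and f(1) = 1. Then there exists δ > 0 such that whenever A is a unital C*-algebra and a ∈ A is positive with ‖a‖ ≤ 1, one has (1 − f(a) − ε)_+ ≼_A (1 − a − δ)_+, where f(a) denotes the image of a under the continuous functional calculus applied to f. -/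
/-!
Choose `δ` so small that `f t > 1 - ε` whenever `t > 1 - 2δ`. Then
`g t = (1 - f t - ε)₊` vanishes wherever `h t = (1 - t - δ)₊` is smaller than `δ`, so
`g = k * h` with the continuous function `k = g / max h δ ≥ 0`, and
`y = √k (a)` satisfies `y * h(a) * y = g(a)` exactly.
-/

open Set

lemma cuntzLE_of_mul_mul_star_eq {A : Type*} [NonUnitalNormedRing A] [StarRing A]
    {a b y : A} (h : y * b * star y = a) : CuntzLE a b :=
  fun _ hε => ⟨y, by rwa [h, sub_self, norm_zero]⟩

lemma div_max_mul_eq_of_eq_zero {g h δ : ℝ} (hδ : 0 < δ) (hg : h < δ → g = 0) :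
    g / max h δ * h = g := by
  rcases lt_or_ge h δ with hlt | hle
  · simp [hg hlt]
  · rw [max_eq_left hle, div_mul_cancel₀ _ (hδ.trans_le hle).ne']

section CStarAlgebra

variable {A : Type*} [CStarAlgebra A]

lemma cuntzLE_cfc_mul {a : A} {k h : ℝ → ℝ}
    (hk : ContinuousOn k (spectrum ℝ a)) (hh : ContinuousOn h (spectrum ℝ a))
    (hk_nonneg : ∀ t ∈ spectrum ℝ a, 0 ≤ k t) :
    CuntzLE (cfc (fun t => k t * h t) a) (cfc h a) := by
  have hsqrt : ContinuousOn (fun t => √(k t)) (spectrum ℝ a) :=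
    Real.continuous_sqrt.comp_continuousOn hk
  have hy : IsSelfAdjoint (cfc (fun t => √(k t)) a) := cfc_predicate _ a
  refine cuntzLE_of_mul_mul_star_eq (y := cfc (fun t => √(k t)) a) ?_
  rw [hy.star_eq, ← cfc_mul _ _ a hsqrt hh,
    ← cfc_mul (fun t => √(k t) * h t) _ a (hsqrt.mul hh) hsqrt]
  refine cfc_congr fun t ht => ?_
  rw [mul_right_comm, Real.mul_self_sqrt (hk_nonneg t ht)]

lemma cuntzLE_cfc_of_eq_zero_of_lt {a : A} {g h : ℝ → ℝ} {δ : ℝ}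
    (hδ : 0 < δ) (hg : ContinuousOn g (spectrum ℝ a)) (hh : ContinuousOn h (spectrum ℝ a))
    (hg_nonneg : ∀ t ∈ spectrum ℝ a, 0 ≤ g t)
    (hgh : ∀ t ∈ spectrum ℝ a, h t < δ → g t = 0) :
    CuntzLE (cfc g a) (cfc h a) := by
  have hmax_pos : ∀ t, 0 < max (h t) δ := fun t => hδ.trans_le (le_max_right _ _)
  have hk := cuntzLE_cfc_mul (k := fun t => g t / max (h t) δ)
    (hg.div (hh.sup continuousOn_const) fun t _ => (hmax_pos t).ne')
    hh fun t ht => div_nonneg (hg_nonneg t ht) (hmax_pos t).le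
  rwa [cfc_congr fun t ht => div_max_mul_eq_of_eq_zero hδ (hgh t ht)] at hk

lemma cutdown_one_sub_cfc {a : A} (ha : IsSelfAdjoint a) {f : ℝ → ℝ}
    (hf : ContinuousOn f (spectrum ℝ a)) (ε : ℝ) :
    cutdown (1 - cfc f a) ε = cfc (fun t => max (1 - f t - ε) 0) a := by
  rw [cutdown, ← cfc_const_one ℝ a, ← cfc_sub _ _ a continuousOn_const hf,
    ← cfc_comp' (fun t => max (t - ε) 0) (fun t => 1 - f t) a (by fun_prop)
      (continuousOn_const.sub hf)]

lemma spectrum_subset_Icc_of_nonneg_of_norm_le_one [PartialOrder A] [StarOrderedRing A]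
    {a : A} (ha : 0 ≤ a) (ha_norm : ‖a‖ ≤ 1) : spectrum ℝ a ⊆ Icc 0 1 :=
  fun t ht => ⟨spectrum_nonneg_of_nonneg ha ht,
    (CFC.le_one_iff a).mp ((CStarAlgebra.norm_le_one_iff_of_nonneg a).mp ha_norm) t ht⟩

end CStarAlgebra

lemma exists_pos_lt_of_continuousWithinAt_one {f : ℝ → ℝ}
    (hf : ContinuousWithinAt f (Icc 0 1) 1) (hf1 : f 1 = 1) {ε : ℝ} (hε : 0 < ε) :
    ∃ δ > 0, ∀ t ∈ Icc (0 : ℝ) 1, 1 - 2 * δ < t → 1 - ε < f t := by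
  obtain ⟨η, hη, hfη⟩ := Metric.continuousWithinAt_iff.mp hf ε hε
  refine ⟨η / 2, by positivity, fun t ht hlt => ?_⟩
  have hdist : dist t 1 < η := by
    rw [Real.dist_eq, abs_sub_lt_iff]
    constructor <;> linarith [ht.2]
  have := hfη ht hdist
  rw [Real.dist_eq, hf1, abs_sub_lt_iff] at this
  linarith [this.2]

theorem stmt12_general (ε : ℝ) (hε : 0 < ε) (f : ℝ → ℝ)
    (hf : ContinuousOn f (Set.Icc 0 1)) (hf1 : f 1 = 1) :
    ∃ δ > (0 : ℝ), ∀ (A : Type) [CStarAlgebra A] [PartialOrder A] [StarOrderedRing A],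
      ∀ a : A, 0 ≤ a → ‖a‖ ≤ 1 →
        CuntzLE (cutdown (1 - cfc f a) ε) (cutdown (1 - a) δ) := by
  obtain ⟨δ, hδ, hfδ⟩ := exists_pos_lt_of_continuousWithinAt_one
    (hf 1 ⟨zero_le_one, le_rfl⟩) hf1 hε
  refine ⟨δ, hδ, fun A _ _ _ a ha ha_norm => ?_⟩
  have hsa : IsSelfAdjoint a := ha.isSelfAdjoint
  have hspec := spectrum_subset_Icc_of_nonneg_of_norm_le_one ha ha_norm
  have hcut := cutdown_one_sub_cfc hsa continuousOn_id δ
  simp only [cfc_id ℝ a, id] at hcut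
  rw [cutdown_one_sub_cfc hsa (hf.mono hspec), hcut]
  refine cuntzLE_cfc_of_eq_zero_of_lt hδ
    (((continuousOn_const.sub (hf.mono hspec)).sub continuousOn_const).sup continuousOn_const)
    (by fun_prop) (fun t _ => le_max_right _ _) fun t ht hlt => max_eq_right ?_
  have := hfδ t (hspec ht) (by linarith [le_max_left (1 - t - δ) 0])
  linarith

theorem stmt12 (ε : ℝ) (hε : 0 < ε) (f : ℝ → ℝ)
    (hf : ContinuousOn f (Set.Icc 0 1)) (hmaps : Set.MapsTo f (Set.Icc 0 1) (Set.Icc 0 1))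
    (hf0 : f 0 = 0) (hf1 : f 1 = 1) :
    ∃ δ > (0 : ℝ), ∀ (A : Type) [CStarAlgebra A] [PartialOrder A] [StarOrderedRing A],
      ∀ a : A, 0 ≤ a → ‖a‖ ≤ 1 →
        CuntzLE (cutdown (1 - cfc f a) ε) (cutdown (1 - a) δ) :=
  stmt12_general ε hε f hf hf1
end
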